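/- Let T be a finite set of linear TGDs, ΣQ a schema, and D a singleton database. If there is no database-preserving ΣQ-homomorphism from chase_T(D) to D, then there is a connected finite subinstance C ⊆ chase_T(D) containing at most two facts such that there is no database-preserving ΣQ-homomorphism from C to D. -/

import Mathlib

set_option autoImplicit false

/-! ### Terms: constants from 𝐂 (coded `Term.const n`) and nulls from 𝐍 (coded `Term.null n`) -/

inductive Term : Type
  | const : ℕ → Term
  | null  : ℕ → Term
deriving DecidableEq

def Term.isConst : Term → Prop
  | .const _ => True
  | .null _  => False

def termEquiv : Term ≃ ℕ ⊕ ℕ where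
  toFun t := match t with
    | .const n => Sum.inl n
    | .null n  => Sum.inr n
  invFun x := match x with
    | Sum.inl n => .const n
    | Sum.inr n => .null n
  left_inv t := by cases t <;> rfl
  right_inv x := by cases x <;> rfl

instance : Primcodable Term := Primcodable.ofEquiv _ termEquiv

/-! ### Relation symbols (with arity) and schemas -/

structure RelSym : Type where
  name : ℕ
  arity : ℕ
deriving DecidableEq

def relSymEquiv : RelSym ≃ ℕ × ℕ where
  toFun r := (r.name, r.arity)
  invFun p := ⟨p.1, p.2⟩
  left_inv r := rfl
  right_inv p := rfl

instance : Primcodable RelSym := Primcodable.ofEquiv _ relSymEquiv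

/-- A schema is a set of relation symbols. -/
abbrev Schema := Set RelSym

/-! ### Facts, instances, databases -/

structure Fct : Type where
  rel : RelSym
  args : List Term
deriving DecidableEq

def fctEquiv : Fct ≃ RelSym × List Term where
  toFun f := (f.rel, f.args)
  invFun p := ⟨p.1, p.2⟩
  left_inv f := rfl
  right_inv p := rfl

instance : Primcodable Fct := Primcodable.ofEquiv _ fctEquiv

/-- A fact is well-formed if its argument tuple matches the arity of its relation symbol
(arities are ≥ 1). -/
def Fct.wf (f : Fct) : Prop := f.args.length = f.rel.arity ∧ 1 ≤ f.rel.arity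

/-- An instance is a (possibly infinite) set of facts. -/
abbrev Inst := Set Fct

/-- The active domain of an instance. -/
def adom (I : Inst) : Set Term := { t | ∃ f ∈ I, t ∈ f.args }

/-- A database: a finite instance of well-formed facts using only constants from 𝐂. -/
def IsDB (I : Inst) : Prop :=
  I.Finite ∧ ∀ f ∈ I, f.wf ∧ ∀ t ∈ f.args, t.isConst

/-- `I` is a Σ-instance. -/
def InstOver (I : Inst) (S : Schema) : Prop := ∀ f ∈ I, f.rel ∈ S ∧ f.wf

/-- `I` is a Σ-database. -/
def IsDatabase (I : Inst) (S : Schema) : Prop := IsDB I ∧ ∀ f ∈ I, f.rel ∈ S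

/-! ### Homomorphisms -/

def Fct.map (h : Term → Term) (f : Fct) : Fct := ⟨f.rel, f.args.map h⟩

/-- `h` is a Σ-homomorphism from `I` to `J`. -/
def IsHomOn (S : Schema) (h : Term → Term) (I J : Inst) : Prop :=
  ∀ f ∈ I, f.rel ∈ S → f.map h ∈ J

/-- `h` is a homomorphism from `I` to `J` (all relation symbols). -/
def IsFullHom (h : Term → Term) (I J : Inst) : Prop := ∀ f ∈ I, f.map h ∈ J

/-- `h` is database-preserving: it is the identity on all constants from 𝐂. -/
def DBPres (h : Term → Term) : Prop := ∀ n : ℕ, h (Term.const n) = Term.const n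

/-- `I →_Σ J`: there is a database-preserving Σ-homomorphism from `I` to `J`. -/
def HomTo (S : Schema) (I J : Inst) : Prop := ∃ h, DBPres h ∧ IsHomOn S h I J

/-- The induced subinstance of `I` on a set `A` of terms. -/
def restrict (I : Inst) (A : Set Term) : Inst := { f | f ∈ I ∧ ∀ t ∈ f.args, t ∈ A }

/-- `I →ⁿ_Σ J`: every induced subinstance of `I` with at most `n` active-domain elements
admits a database-preserving Σ-homomorphism to `J`. -/
def HomN (S : Schema) (n : ℕ) (I J : Inst) : Prop :=
  ∀ A : Set Term, A ⊆ adom I → A.Finite → A.ncard ≤ n → HomTo S (restrict I A) J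

/-- `I →^lim_Σ J`. -/
def HomLim (S : Schema) (I J : Inst) : Prop := ∀ n : ℕ, 1 ≤ n → HomN S n I J

/-- Homomorphic equivalence of instances. -/
def HomEquiv (I J : Inst) : Prop := (∃ h, IsFullHom h I J) ∧ (∃ h, IsFullHom h J I)

/-! ### Gaifman graph and connectedness -/

def coOccur (I : Inst) (a b : Term) : Prop := ∃ f ∈ I, a ∈ f.args ∧ b ∈ f.args

/-- The Gaifman graph of `I` is connected. -/
def Connected (I : Inst) : Prop :=
  ∀ a ∈ adom I, ∀ b ∈ adom I, Relation.ReflTransGen (coOccur I) a b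

/-- Restriction `I|_Σ` of `I` to the facts using a relation symbol from Σ. -/
def restrS (I : Inst) (S : Schema) : Inst := { f | f ∈ I ∧ f.rel ∈ S }

/-- `I` is Σ-connected. -/
def SConnected (S : Schema) (I : Inst) : Prop := Connected (restrS I S)

/-- `C` is a maximally Σ-connected component of `I`. -/
def MaxConnComp (S : Schema) (I C : Inst) : Prop :=
  C ⊆ restrS I S ∧ Connected C ∧
    ∀ C', C ⊆ C' → C' ⊆ restrS I S → Connected C' → C' = C

/-! ### Conjunctive queries -/

structure Atom : Type where
  rel : RelSym
  args : List ℕ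
deriving DecidableEq

def atomEquiv : Atom ≃ RelSym × List ℕ where
  toFun a := (a.rel, a.args)
  invFun p := ⟨p.1, p.2⟩
  left_inv a := rfl
  right_inv p := rfl

instance : Primcodable Atom := Primcodable.ofEquiv _ atomEquiv

def Atom.wf (a : Atom) : Prop := a.args.length = a.rel.arity ∧ 1 ≤ a.rel.arity

/-- Instantiate an atom by an assignment of terms to variables. -/
def Atom.inst (h : ℕ → Term) (a : Atom) : Fct := ⟨a.rel, a.args.map h⟩

/-- A conjunctive query: a finite set of relational atoms (as a list) together with a
tuple of answer variables. -/
structure CQ : Type where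
  atoms : List Atom
  ans : List ℕ
deriving DecidableEq

def cqEquiv : CQ ≃ List Atom × List ℕ where
  toFun q := (q.atoms, q.ans)
  invFun p := ⟨p.1, p.2⟩
  left_inv q := rfl
  right_inv p := rfl

instance : Primcodable CQ := Primcodable.ofEquiv _ cqEquiv

/-- `q` is a CQ over schema Σ. -/
def CQ.Over (q : CQ) (S : Schema) : Prop := ∀ a ∈ q.atoms, a.rel ∈ S ∧ a.wf

/-- A homomorphism from `q` to `I`. -/
def CQHom (q : CQ) (I : Inst) (h : ℕ → Term) : Prop := ∀ a ∈ q.atoms, a.inst h ∈ I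

/-- `c̄` is an answer to `q` on `I`. -/
def IsAnswer (q : CQ) (I : Inst) (c : List Term) : Prop :=
  (∀ x ∈ c, x ∈ adom I) ∧ ∃ h, CQHom q I h ∧ q.ans.map h = c

/-- The canonical database of a CQ (variables viewed as constants/nulls). -/
def canonDB (q : CQ) : Inst := { f | ∃ a ∈ q.atoms, f = a.inst Term.null }

/-! ### Tuple-generating dependencies -/

/-- A TGD `∀x̄∀ȳ (φ(x̄,ȳ) → ∃z̄ ψ(x̄,z̄))`, with `frontier` the tuple `x̄` of
frontier variables. -/
structure TGD : Type where
  body : List Atom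
  head : List Atom
  frontier : List ℕ
deriving DecidableEq

def tgdEquiv : TGD ≃ List Atom × List Atom × List ℕ where
  toFun t := (t.body, t.head, t.frontier)
  invFun p := ⟨p.1, p.2.1, p.2.2⟩
  left_inv t := rfl
  right_inv p := rfl

instance : Primcodable TGD := Primcodable.ofEquiv _ tgdEquiv

def TGD.bodyVars (t : TGD) : Set ℕ := { x | ∃ a ∈ t.body, x ∈ a.args }
def TGD.headVars (t : TGD) : Set ℕ := { x | ∃ a ∈ t.head, x ∈ a.args }

/-- Well-formedness of a TGD: atoms are well-formed, the frontier variables are distinct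
body variables, and every variable shared by body and head is a frontier variable. -/
def TGD.wf (t : TGD) : Prop :=
  (∀ a ∈ t.body, a.wf) ∧ (∀ a ∈ t.head, a.wf) ∧ t.frontier.Nodup ∧
  (∀ x ∈ t.frontier, x ∈ t.bodyVars) ∧
  (∀ x, x ∈ t.bodyVars → x ∈ t.headVars → x ∈ t.frontier)

/-- A TGD is linear if its body contains at most one atom. -/
def TGD.Linear (t : TGD) : Prop := t.body.length ≤ 1

/-- A TGD is guarded if some body atom contains all body variables. -/
def TGD.Guarded (t : TGD) : Prop := ∃ a ∈ t.body, ∀ x, x ∈ t.bodyVars → x ∈ a.args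

/-- A TGD is frontier-one if it has exactly one frontier variable. -/
def TGD.FrontierOne (t : TGD) : Prop := t.frontier.length = 1

/-- `I ⊨ ϑ`. -/
def TGD.Satisfies (I : Inst) (t : TGD) : Prop :=
  ∀ g : ℕ → Term, (∀ a ∈ t.body, a.inst g ∈ I) →
    ∃ h : ℕ → Term, (∀ a ∈ t.head, a.inst h ∈ I) ∧ ∀ x ∈ t.frontier, h x = g x

/-- `I` is a model of the set `T` of TGDs. -/
def IsModel (I : Inst) (T : List TGD) : Prop := ∀ t ∈ T, TGD.Satisfies I t

/-- Number of (distinct) variables in the body of a TGD. -/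
def TGD.bodyVarList (t : TGD) : List ℕ := ((t.body.map Atom.args).flatten).dedup

/-- The body width of a set of TGDs. -/
def bodyWidth (T : List TGD) : ℕ := (T.map (fun t => t.bodyVarList.length)).foldr max 0

/-! ### The chase -/

/-- `ϑ` is applicable at tuple `c̄` in `I`. -/
def TGD.Applicable (t : TGD) (I : Inst) (c : List Term) : Prop :=
  (∃ g : ℕ → Term, (∀ a ∈ t.body, a.inst g ∈ I) ∧ t.frontier.map g = c) ∧
  ¬ (∃ h : ℕ → Term, (∀ a ∈ t.head, a.inst h ∈ I) ∧ t.frontier.map h = c)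

/-- `J` is the result of applying `ϑ` in `I` at `c̄`: the head is added, with the
existential variables replaced by distinct fresh nulls. -/
def TGD.StepResult (t : TGD) (I : Inst) (c : List Term) (J : Inst) : Prop :=
  ∃ h : ℕ → Term,
    t.frontier.map h = c ∧
    (∀ x, x ∈ t.headVars → x ∉ t.frontier → (¬ (h x).isConst ∧ h x ∉ adom I)) ∧
    (∀ x y, x ∈ t.headVars → y ∈ t.headVars → x ∉ t.frontier → y ∉ t.frontier →
      h x = h y → x = y) ∧
    J = I ∪ { f | ∃ a ∈ t.head, f = a.inst h }

/-- A chase step from `I` to `J` with some TGD of `T`. -/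
def ChaseStep (T : List TGD) (I J : Inst) : Prop :=
  ∃ t ∈ T, ∃ c, t.Applicable I c ∧ t.StepResult I c J

/-- A chase sequence for `I` with `T` (stalling when no TGD is applicable). -/
def IsChaseSeq (T : List TGD) (I : Inst) (f : ℕ → Inst) : Prop :=
  f 0 = I ∧ ∀ i, ChaseStep T (f i) (f (i+1)) ∨ ((¬ ∃ J, ChaseStep T (f i) J) ∧ f (i+1) = f i)

/-- Fairness: every applicable TGD application is eventually performed or becomes
non-applicable. -/
def IsFair (T : List TGD) (f : ℕ → Inst) : Prop :=
  ∀ i, ∀ t ∈ T, ∀ c, TGD.Applicable t (f i) c →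
    ∃ j, i ≤ j ∧
      ((TGD.Applicable t (f j) c ∧ TGD.StepResult t (f j) c (f (j+1))) ∨
        ¬ TGD.Applicable t (f j) c)

/-- `J` is the result of some fair chase sequence for `I` with `T`. -/
def IsChaseResult (T : List TGD) (I J : Inst) : Prop :=
  ∃ f : ℕ → Inst, IsChaseSeq T I f ∧ IsFair T f ∧ J = ⋃ i, f i

/-- `chase T I`: the result of an arbitrary but fixed fair chase sequence for `I` with `T`. -/
noncomputable def chase (T : List TGD) (I : Inst) : Inst :=
  @dite _ (∃ J, IsChaseResult T I J) (Classical.dec _) (fun h => h.choose) (fun _ => I)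

/-! A homomorphism into a single fact `d` has no freedom: every Σ-fact must be sent onto `d`,
so a term at position `i` of a Σ-fact must go to the `i`-th argument of `d`. A homomorphism
therefore exists as soon as each Σ-fact maps to `d` on its own (matching relation symbol,
arity and constants) and no term is sent to two different arguments of `d` by two Σ-facts
containing it. A failure of either condition is witnessed by one fact, or by two facts that
share a term; both are connected. -/

theorem List.map_eq_iff_forall_mem_zip {α β : Type*} {f : α → β} {l : List α} {l' : List β} :
    l.map f = l' ↔ l.length = l'.length ∧ ∀ p ∈ l.zip l', f p.1 = p.2 := by
  induction l generalizing l' with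
  | nil => cases l' <;> simp
  | cons a l ih => cases l' <;> simp [ih, and_left_comm]

theorem Fct.map_eq_iff {h : Term → Term} {f d : Fct} :
    f.map h = d ↔
      f.rel = d.rel ∧ f.args.length = d.args.length ∧ ∀ p ∈ f.args.zip d.args, h p.1 = p.2 := by
  cases f; cases d
  simp [Fct.map, List.map_eq_iff_forall_mem_zip]

theorem connected_singleton (f : Fct) : Connected {f} := by
  rintro a ⟨g, hg, ha⟩ b ⟨g', hg', hb⟩
  exact .single ⟨f, rfl, Set.eq_of_mem_singleton hg ▸ ha, Set.eq_of_mem_singleton hg' ▸ hb⟩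

theorem connected_pair {f₁ f₂ : Fct} {t : Term} (h₁ : t ∈ f₁.args) (h₂ : t ∈ f₂.args) :
    Connected {f₁, f₂} := by
  have ht : ∀ f ∈ ({f₁, f₂} : Inst), t ∈ f.args := by
    rintro f (rfl | rfl) <;> assumption
  rintro a ⟨f, hf, ha⟩ b ⟨g, hg, hb⟩
  exact .tail (.single ⟨f, hf, ha, ht f hf⟩) ⟨g, hg, ht g hg, hb⟩

def Forces (S : Schema) (I : Inst) (d : Fct) (t v : Term) : Prop :=
  ∃ f ∈ I, f.rel ∈ S ∧ (t, v) ∈ f.args.zip d.args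

theorem IsHomOn.apply_eq_of_forces {S : Schema} {h : Term → Term} {I : Inst} {d : Fct}
    (hh : IsHomOn S h I {d}) {t v : Term} (hf : Forces S I d t v) : h t = v := by
  obtain ⟨f, hfI, hfS, hz⟩ := hf
  exact (Fct.map_eq_iff.mp (hh f hfI hfS)).2.2 _ hz

section TwoFactWitness

variable (S : Schema) (I : Inst)

theorem homTo_singleton_of_forall_two_facts (d : Fct)
    (hsmall : ∀ C, C ⊆ I → Connected C → C.Finite → C.ncard ≤ 2 → HomTo S C {d}) :
    HomTo S I {d} := by
  classical
  have hone : ∀ f ∈ I, HomTo S {f} {d} := fun f hf =>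
    hsmall {f} (Set.singleton_subset_iff.mpr hf) (connected_singleton f)
      (Set.finite_singleton f) (by simp)
  have hforced_unique : ∀ t v₁ v₂, Forces S I d t v₁ → Forces S I d t v₂ → v₁ = v₂ := by
    rintro t v₁ v₂ ⟨f₁, hf₁, hS₁, hz₁⟩ ⟨f₂, hf₂, hS₂, hz₂⟩
    obtain ⟨g, -, hg⟩ := hsmall {f₁, f₂} (Set.insert_subset hf₁ (Set.singleton_subset_iff.mpr hf₂))
      (connected_pair (List.of_mem_zip hz₁).1 (List.of_mem_zip hz₂).1) (Set.toFinite _)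
      ((Set.ncard_insert_le _ _).trans (by simp))
    exact (hg.apply_eq_of_forces ⟨f₁, by simp, hS₁, hz₁⟩).symm.trans
      (hg.apply_eq_of_forces ⟨f₂, by simp, hS₂, hz₂⟩)
  have hforced_const : ∀ n v, Forces S I d (.const n) v → v = .const n := by
    rintro n v ⟨f, hf, hS, hz⟩
    obtain ⟨g, hpres, hg⟩ := hone f hf
    rw [← hg.apply_eq_of_forces ⟨f, rfl, hS, hz⟩, hpres n]
  let h : Term → Term := fun t => if ht : ∃ v, Forces S I d t v then ht.choose else t
  have h_forced : ∀ t v, Forces S I d t v → h t = v := fun t v ht => by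
    simp only [h, dif_pos (⟨v, ht⟩ : ∃ v, Forces S I d t v)]
    exact hforced_unique t _ v (Exists.choose_spec ⟨v, ht⟩) ht
  refine ⟨h, fun n => ?_, fun f hf hS => Fct.map_eq_iff.mpr ?_⟩
  · by_cases ht : ∃ v, Forces S I d (.const n) v
    · obtain ⟨v, hv⟩ := ht
      rw [h_forced _ v hv, hforced_const n v hv]
    · simp only [h, dif_neg ht]
  · obtain ⟨g, -, hg⟩ := hone f hf
    obtain ⟨hrel, hlen, -⟩ := Fct.map_eq_iff.mp (hg f rfl hS)
    exact ⟨hrel, hlen, fun p hp => h_forced p.1 p.2 ⟨f, hf, hS, hp⟩⟩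

theorem exists_two_fact_witness_of_not_homTo {D : Inst} (hD : D.Subsingleton)
    (h : ¬ HomTo S I D) :
    ∃ C : Inst, C ⊆ I ∧ Connected C ∧ C.Finite ∧ C.ncard ≤ 2 ∧ ¬ HomTo S C D := by
  by_contra! hsmall
  rcases hD.eq_empty_or_singleton with rfl | ⟨d, rfl⟩
  · refine h ⟨id, fun _ => rfl, fun f hf hS => ?_⟩
    obtain ⟨g, -, hg⟩ := hsmall {f} (Set.singleton_subset_iff.mpr hf) (connected_singleton f)
      (Set.finite_singleton f) (by simp)
    exact (hg f rfl hS).elim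
  · exact h (homTo_singleton_of_forall_two_facts S I d hsmall)

end TwoFactWitness

theorem linear_two_fact_witness_general (T : List TGD) (SQ : Schema)
    (D : Inst) (hsing : D.Subsingleton)
    (h : ¬ HomTo SQ (chase T D) D) :
    ∃ C : Inst, C ⊆ chase T D ∧ Connected C ∧ C.Finite ∧ C.ncard ≤ 2 ∧
      ¬ HomTo SQ C D :=
  exists_two_fact_witness_of_not_homTo SQ (chase T D) hsing h

/-- Lemma 14: if `chase_T(D) ↛_{ΣQ} D` for a singleton database `D`
and linear `T`, then some connected `C ⊆ chase_T(D)` with at most two facts satisfies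
`C ↛_{ΣQ} D`. -/
theorem linear_two_fact_witness (T : List TGD) (SQ : Schema)
    (hT : ∀ t ∈ T, t.wf ∧ t.Linear)
    (D : Inst) (hD : IsDB D) (hsing : D.Subsingleton)
    (h : ¬ HomTo SQ (chase T D) D) :
    ∃ C : Inst, C ⊆ chase T D ∧ Connected C ∧ C.Finite ∧ C.ncard ≤ 2 ∧
      ¬ HomTo SQ C D :=
  linear_two_fact_witness_general T SQ D hsing h
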